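/- arXiv:2007.11071 — 7 statements merged into one kernel-verified Lean document; each statement's English description precedes it below -/
import Mathlib

section
/- If F and G are hereditary and spreading families on ℕ and there exists a permutation π of ℕ such that G = {π[s] : s ∈ F}, then F = G. -/
open scoped Classical

noncomputable section

/-- Characteristic function of a finite set, as an element of the Cantor cube `2^ι`. -/
def chi {ι : Type*} (s : Finset ι) : ι → Bool := fun a => decide (a ∈ s)

/-- The copy of a collection of finite sets inside the Cantor cube `2^ι`. -/
def chiImg {ι : Type*} (F : Set (Finset ι)) : Set (ι → Bool) := chi '' F

/-- `F` is a family: it contains the empty set and all singletons. -/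
def IsFam {ι : Type*} (F : Set (Finset ι)) : Prop := ∅ ∈ F ∧ ∀ a : ι, {a} ∈ F

/-- `F` is hereditary: it is closed under subsets. -/
def IsHereditary {ι : Type*} (F : Set (Finset ι)) : Prop :=
  ∀ ⦃s t : Finset ι⦄, s ⊆ t → t ∈ F → s ∈ F

/-- `F` is compact: its copy in the Cantor cube `2^ι` is closed
(equivalently, compact). -/
def IsCompactFam {ι : Type*} (F : Set (Finset ι)) : Prop := IsClosed (chiImg F)

/-- The set of maximal elements of `F` with respect to inclusion. -/
def famMAX {ι : Type*} (F : Set (Finset ι)) : Set (Finset ι) :=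
  {s ∈ F | ∀ t ∈ F, s ⊆ t → s = t}

/-- The image `{π[s] : s ∈ F}` of a collection of finite sets under a permutation of the
index set. -/
def permImg {ι : Type*} (π : Equiv.Perm ι) (F : Set (Finset ι)) : Set (Finset ι) :=
  (fun s => Finset.image π s) '' F

/-- `t` is a spread of `s`: there is an injection `σ` of `s` into the index set with
`σ i ≥ i` for every `i ∈ s`, whose image is `t`. -/
def IsSpread {ι : Type*} [LinearOrder ι] (s t : Finset ι) : Prop :=
  ∃ σ : ι → ι, Set.InjOn σ ↑s ∧ (∀ i ∈ s, i ≤ σ i) ∧ t = Finset.image σ s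

/-- `F` is spreading: it contains every spread of each of its members. -/
def IsSpreading {ι : Type*} [LinearOrder ι] (F : Set (Finset ι)) : Prop :=
  ∀ s ∈ F, ∀ t, IsSpread s t → t ∈ F

noncomputable def gr (B : ℕ → Finset ℕ) : ℕ → ℕ
  | k =>
    let prev := (Finset.range k).attach.image (fun i => gr B i.1)
    if h : (B k \ prev).Nonempty then (B k \ prev).max' h else 0
termination_by k => k
decreasing_by exact Finset.mem_range.mp i.2

lemma attach_image {α β : Type*} [DecidableEq β] (s : Finset α) (f : α → β) :
    s.attach.image (fun i => f i.1) = s.image f := by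
  ext y; simp

lemma gr_def (B : ℕ → Finset ℕ) (k : ℕ) :
    gr B k = (if h : (B k \ ((Finset.range k).image (gr B))).Nonempty
      then (B k \ ((Finset.range k).image (gr B))).max' h else 0) := by
  rw [gr]
  simp only [attach_image]

lemma grS_nonempty (B : ℕ → Finset ℕ) (hB : ∀ k, k < (B k).card) (k : ℕ) :
    (B k \ ((Finset.range k).image (gr B))).Nonempty := by
  rw [← Finset.card_pos]
  have h1 : ((Finset.range k).image (gr B)).card ≤ k := by
    calc _ ≤ (Finset.range k).card := Finset.card_image_le
    _ = k := Finset.card_range k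
  have := Finset.le_card_sdiff ((Finset.range k).image (gr B)) (B k)
  have := hB k
  omega

lemma gr_mem (B : ℕ → Finset ℕ) (hB : ∀ k, k < (B k).card) (k : ℕ) :
    gr B k ∈ B k \ ((Finset.range k).image (gr B)) := by
  rw [gr_def, dif_pos (grS_nonempty B hB k)]
  exact Finset.max'_mem _ _

lemma gr_max (B : ℕ → Finset ℕ) (hB : ∀ k, k < (B k).card) (k : ℕ) {y : ℕ}
    (hy : y ∈ B k) (h2 : y ∉ (Finset.range k).image (gr B)) : y ≤ gr B k := by
  rw [gr_def, dif_pos (grS_nonempty B hB k)]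
  exact Finset.le_max' _ _ (Finset.mem_sdiff.mpr ⟨hy, h2⟩)

lemma gr_ne (B : ℕ → Finset ℕ) (hB : ∀ k, k < (B k).card) {i k : ℕ} (h : i < k) :
    gr B i ≠ gr B k := by
  intro he
  have := (Finset.mem_sdiff.mp (gr_mem B hB k)).2
  exact this (Finset.mem_image.mpr ⟨i, Finset.mem_range.mpr h, he⟩)

lemma emb_gap {n : ℕ} (e : Fin n ↪o ℕ) : ∀ (d : ℕ) (j k : Fin n), (k : ℕ) = j + d →
    e j + d ≤ e k := by
  intro d
  induction d with
  | zero => intro j k h; have : j = k := Fin.ext (by omega); simp [this]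
  | succ d ih =>
    intro j k h
    have hk' : (j : ℕ) + d < n := by omega
    have h1 := ih j ⟨j + d, hk'⟩ rfl
    have h2 : e ⟨(j : ℕ) + d, hk'⟩ < e k := e.strictMono (by simp [Fin.lt_def]; omega)
    omega

lemma key (F G : Set (Finset ℕ)) (hFs : IsSpreading F) (hGs : IsSpreading G)
    (π : Equiv.Perm ℕ) (hπ : G = permImg π F) : F ⊆ G := by
  intro s hs
  obtain ⟨n, hn⟩ : ∃ n, s.card = n := ⟨s.card, rfl⟩
  set e : Fin n ↪o ℕ := s.orderEmbOfFin hn with he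
  set B : ℕ → Finset ℕ := (fun k =>
    if h : k < n then (Finset.range (e ⟨k, h⟩ + 1)).image π.symm else Finset.range (k+1))
    with hBdef
  have hBk : ∀ (k) (h : k < n), B k = (Finset.range (e ⟨k, h⟩ + 1)).image π.symm := by
    intro k h; simp [hBdef, h]
  have hB : ∀ k, k < (B k).card := by
    intro k
    by_cases h : k < n
    · have h0 : (0:ℕ) < n := by omega
      have hgap := emb_gap e k ⟨0, h0⟩ ⟨k, h⟩ (by simp)
      rw [hBk k h, Finset.card_image_of_injective _ π.symm.injective, Finset.card_range]
      omega
    · simp [hBdef, h]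
  have hmem : ∀ (m : ℕ) (h : m < n), π (gr B m) ≤ e ⟨m, h⟩ := by
    intro m h
    have h1 := (Finset.mem_sdiff.mp (gr_mem B hB m)).1
    rw [hBk m h] at h1
    obtain ⟨v, hv, hveq⟩ := Finset.mem_image.mp h1
    rw [← hveq, Equiv.apply_symm_apply]
    exact Nat.lt_succ_iff.mp (Finset.mem_range.mp hv)
  set t : Finset ℕ := (Finset.range n).image (gr B) with htdef
  have hinj : Set.InjOn (gr B) ↑(Finset.range n) := by
    intro i _ k _ hik
    by_contra hne
    rcases Nat.lt_or_ge i k with h | h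
    · exact gr_ne B hB h hik
    · exact gr_ne B hB (by omega : k < i) hik.symm
  have ht : t.card = n := by
    rw [htdef, Finset.card_image_of_injOn hinj, Finset.card_range]
  have CC : ∀ j : Fin n, (t.filter (fun x => x < e j)).card ≤ (j : ℕ) := by
    intro j
    have h1 : t.filter (fun x => x < e j) =
        ((Finset.range n).filter (fun m => gr B m < e j)).image (gr B) := by
      rw [htdef, Finset.filter_image]
    set S := (Finset.range n).filter (fun m => gr B m < e j) with hS
    rw [h1]
    refine le_trans Finset.card_image_le ?_
    rcases S.eq_empty_or_nonempty with hSe | hSne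
    · simp [hSe]
    set m := S.max' hSne with hm
    have hmS : m ∈ S := S.max'_mem hSne
    have hmn : m < n := Finset.mem_range.mp (Finset.mem_filter.mp hmS).1
    have hmlt : gr B m < e j := (Finset.mem_filter.mp hmS).2
    rcases Nat.lt_or_ge m j with hcase | hcase
    · have hsub : S ⊆ Finset.range (m+1) := by
        intro x hx; exact Finset.mem_range.mpr (Nat.lt_succ_iff.mpr (S.le_max' x hx))
      have := Finset.card_le_card hsub
      simp only [Finset.card_range] at this
      omega
    · set Y := (B m).filter (fun y => (e j : ℕ) ≤ y) with hY
      have hYcard : (B m).card ≤ Y.card + (e j : ℕ) := by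
        have hsub : B m ⊆ Y ∪ Finset.range (e j) := by
          intro y hy
          rcases le_or_gt ((e j : ℕ)) y with h | h
          · exact Finset.mem_union_left _ (Finset.mem_filter.mpr ⟨hy, h⟩)
          · exact Finset.mem_union_right _ (Finset.mem_range.mpr h)
        calc (B m).card ≤ (Y ∪ Finset.range (e j)).card := Finset.card_le_card hsub
        _ ≤ Y.card + (Finset.range (e j)).card := Finset.card_union_le _ _
        _ = Y.card + (e j : ℕ) := by rw [Finset.card_range]
      have hBmcard : (e ⟨m, hmn⟩ : ℕ) + 1 = (B m).card := by
        rw [hBk m hmn, Finset.card_image_of_injective _ π.symm.injective, Finset.card_range]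
      set R := (Finset.range m).filter (fun i => (e j : ℕ) ≤ gr B i) with hR
      have hYR : Y ⊆ R.image (gr B) := by
        intro y hy
        obtain ⟨hy1, hy2⟩ := Finset.mem_filter.mp hy
        have hyim : y ∈ (Finset.range m).image (gr B) := by
          by_contra hni
          have := gr_max B hB m hy1 hni
          omega
        obtain ⟨i, hi, hieq⟩ := Finset.mem_image.mp hyim
        exact Finset.mem_image.mpr ⟨i, Finset.mem_filter.mpr ⟨hi, by rw [hieq]; exact hy2⟩, hieq⟩
      have hYcard2 : Y.card ≤ R.card := le_trans (Finset.card_le_card hYR) Finset.card_image_le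
      have hdisj : Disjoint R (S ∩ Finset.range m) := by
        rw [Finset.disjoint_left]
        intro i hiR hiS
        have hge := (Finset.mem_filter.mp hiR).2
        have hlt := (Finset.mem_filter.mp (Finset.mem_inter.mp hiS).1).2
        omega
      have hunion : R.card + (S ∩ Finset.range m).card ≤ m := by
        have hsub : R ∪ (S ∩ Finset.range m) ⊆ Finset.range m := by
          intro x hx
          rcases Finset.mem_union.mp hx with h | h
          · exact (Finset.mem_filter.mp h).1
          · exact (Finset.mem_inter.mp h).2
        have := Finset.card_le_card hsub
        rw [Finset.card_union_of_disjoint hdisj] at this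
        simpa using this
      have hScard : S.card ≤ (S ∩ Finset.range m).card + 1 := by
        have hsub : S ⊆ insert m (S ∩ Finset.range m) := by
          intro x hx
          rcases eq_or_ne x m with h | h
          · simp [h]
          · have hxm : x < m := lt_of_le_of_ne (S.le_max' x hx) h
            exact Finset.mem_insert.mpr
              (Or.inr (Finset.mem_inter.mpr ⟨hx, Finset.mem_range.mpr hxm⟩))
        calc S.card ≤ _ := Finset.card_le_card hsub
        _ ≤ _ := Finset.card_insert_le _ _
      have hgap : (e j : ℕ) + (m - (j:ℕ)) ≤ e ⟨m, hmn⟩ :=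
        emb_gap e (m - (j:ℕ)) j ⟨m, hmn⟩ (by simp; omega)
      have hmval : ((⟨m, hmn⟩ : Fin n) : ℕ) = m := rfl
      omega
  set f : Fin n ↪o ℕ := t.orderEmbOfFin ht with hf
  have dom : ∀ j : Fin n, e j ≤ f j := by
    intro j
    by_contra hlt
    push_neg at hlt
    have hsub : (Finset.range ((j:ℕ)+1)).attach.image
        (fun i => f ⟨i.1, lt_of_le_of_lt (Nat.lt_succ_iff.mp (Finset.mem_range.mp i.2)) j.2⟩)
        ⊆ t.filter (fun x => x < e j) := by
      intro y hy
      obtain ⟨i, _, rfl⟩ := Finset.mem_image.mp hy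
      refine Finset.mem_filter.mpr ⟨Finset.orderEmbOfFin_mem t ht _, ?_⟩
      have hij : (⟨i.1, lt_of_le_of_lt (Nat.lt_succ_iff.mp (Finset.mem_range.mp i.2)) j.2⟩ : Fin n) ≤ j := by
        rw [Fin.le_def]
        exact Nat.lt_succ_iff.mp (Finset.mem_range.mp i.2)
      exact lt_of_le_of_lt (f.monotone hij) hlt
    have hcard : ((Finset.range ((j:ℕ)+1)).attach.image
        (fun i => f ⟨i.1, lt_of_le_of_lt (Nat.lt_succ_iff.mp (Finset.mem_range.mp i.2)) j.2⟩)).card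
        = (j:ℕ)+1 := by
      rw [Finset.card_image_of_injOn, Finset.card_attach, Finset.card_range]
      intro x _ y _ hxy
      have h2 := f.injective hxy
      exact Subtype.ext (by simpa [Fin.ext_iff] using h2)
    have h3 := Finset.card_le_card hsub
    have h4 := CC j
    omega
  -- t is a spread of s
  have htF : t ∈ F := by
    set iso := s.orderIsoOfFin hn with hiso
    set σ : ℕ → ℕ := fun i => if h : i ∈ s then f (iso.symm ⟨i, h⟩) else i with hσ
    have hσval : ∀ (i) (h : i ∈ s), σ i = f (iso.symm ⟨i, h⟩) := by
      intro i h; simp [hσ, h]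
    have hei : ∀ (i) (h : i ∈ s), e (iso.symm ⟨i, h⟩) = i := by
      intro i h
      have h2 : ((iso (iso.symm ⟨i, h⟩)) : ℕ) = e (iso.symm ⟨i, h⟩) :=
        Finset.coe_orderIsoOfFin_apply s hn _
      rw [iso.apply_symm_apply] at h2
      exact h2.symm
    have hσinj : Set.InjOn σ ↑s := by
      intro i₁ h₁ i₂ h₂ heq
      rw [hσval i₁ h₁, hσval i₂ h₂] at heq
      have := iso.symm.injective (f.injective heq)
      exact Subtype.ext_iff.mp this
    have hσge : ∀ i ∈ s, i ≤ σ i := by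
      intro i h
      rw [hσval i h]
      calc i = e (iso.symm ⟨i, h⟩) := (hei i h).symm
      _ ≤ f (iso.symm ⟨i, h⟩) := dom _
    have himgsub : s.image σ ⊆ t := by
      intro y hy
      obtain ⟨i, hi, rfl⟩ := Finset.mem_image.mp hy
      rw [hσval i hi]
      exact Finset.orderEmbOfFin_mem t ht _
    have himg : t = s.image σ := by
      refine (Finset.eq_of_subset_of_card_le himgsub ?_).symm
      rw [Finset.card_image_of_injOn hσinj, hn, ht]
    exact hFs s hs t ⟨σ, hσinj, hσge, himg⟩
  have huG : Finset.image π t ∈ G := by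
    rw [hπ]
    simp only [permImg, Set.mem_image]
    exact ⟨t, htF, by ext x; simp⟩
  -- s is a spread of π[t]
  have hspread2 : IsSpread (Finset.image π t) s := by
    set A : ℕ → ℕ := fun x => if h : ∃ m, m < n ∧ gr B m = x
      then e ⟨h.choose, h.choose_spec.1⟩ else 0 with hA
    have hAval : ∀ (m) (hm : m < n), A (gr B m) = e ⟨m, hm⟩ := by
      intro m hm
      have hex : ∃ m', m' < n ∧ gr B m' = gr B m := ⟨m, hm, rfl⟩
      have hch := hex.choose_spec
      have hcm : hex.choose = m := by
        by_contra hne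
        rcases Nat.lt_or_ge hex.choose m with h | h
        · exact gr_ne B hB h hch.2
        · exact gr_ne B hB (by omega : m < hex.choose) hch.2.symm
      simp only [hA, dif_pos hex]
      congr 1
      exact Fin.ext hcm
    set σ' : ℕ → ℕ := fun y => A (π.symm y) with hσ'
    have huform : ∀ y ∈ Finset.image π t, ∃ (m : ℕ) (hm : m < n), y = π (gr B m) := by
      intro y hy
      obtain ⟨x, hx, rfl⟩ := Finset.mem_image.mp hy
      obtain ⟨m, hm, rfl⟩ := Finset.mem_image.mp hx
      exact ⟨m, Finset.mem_range.mp hm, rfl⟩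
    have hσ'val : ∀ (m) (hm : m < n), σ' (π (gr B m)) = e ⟨m, hm⟩ := by
      intro m hm
      simp only [hσ', Equiv.symm_apply_apply]
      exact hAval m hm
    have h1 : Set.InjOn σ' ↑(Finset.image π t) := by
      intro y₁ hy₁ y₂ hy₂ heq
      obtain ⟨m₁, hm₁, rfl⟩ := huform y₁ hy₁
      obtain ⟨m₂, hm₂, rfl⟩ := huform y₂ hy₂
      rw [hσ'val m₁ hm₁, hσ'val m₂ hm₂] at heq
      have := e.injective heq
      rw [Fin.mk.injEq] at this
      rw [this]
    have h2 : ∀ y ∈ Finset.image π t, y ≤ σ' y := by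
      intro y hy
      obtain ⟨m, hm, rfl⟩ := huform y hy
      rw [hσ'val m hm]
      exact hmem m hm
    have h3 : s = (Finset.image π t).image σ' := by
      have hsub : (Finset.image π t).image σ' ⊆ s := by
        intro y hy
        obtain ⟨z, hz, rfl⟩ := Finset.mem_image.mp hy
        obtain ⟨m, hm, rfl⟩ := huform z hz
        rw [hσ'val m hm]
        exact Finset.orderEmbOfFin_mem s hn _
      refine (Finset.eq_of_subset_of_card_le hsub ?_).symm
      rw [Finset.card_image_of_injOn h1,
        Finset.card_image_of_injective _ (Equiv.injective π), ht, hn]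
    exact ⟨σ', h1, h2, h3⟩
  exact hGs _ huG s hspread2

/-- If `F` and `G` are hereditary and spreading families on `ℕ` and there is a
permutation `π` of `ℕ` with `G = {π[s] : s ∈ F}`, then `F = G`. -/
theorem statement1 (F G : Set (Finset ℕ))
    (hFfam : IsFam F) (hGfam : IsFam G)
    (hFh : IsHereditary F) (hFs : IsSpreading F)
    (hGh : IsHereditary G) (hGs : IsSpreading G)
    (π : Equiv.Perm ℕ) (hπ : G = permImg π F) :
    F = G := by
  apply Set.Subset.antisymm
  · exact key F G hFs hGs π hπ
  · refine key G F hGs hFs π.symm ?_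
    rw [hπ]
    ext u
    simp only [permImg, Set.mem_image]
    constructor
    · intro hu
      refine ⟨Finset.image π u, ⟨u, hu, by ext x; simp⟩, ?_⟩
      ext x; simp
    · rintro ⟨v, ⟨w, hw, rfl⟩, rfl⟩
      exact Set.mem_of_eq_of_mem (by ext x; simp) hw
end
end

section
/- Let F be a compact hereditary family on an infinite cardinal κ. Then the set { Σ_{ξ∈s} θ_ξ e_ξ* : s ∈ F and (θ_ξ)_{ξ∈s} is a family of scalars with |θ_ξ| = 1 } is closed in the weak* topology of the dual space X_F*. -/
open scoped Classical

noncomputable section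

variable {ι : Type*}

/-- A family of finite subsets of `ι`, containing the empty set and all singletons. -/
structure CombFamily (ι : Type*) where
  sets : Set (Finset ι)
  empty_mem : ∅ ∈ sets
  singleton_mem : ∀ a : ι, {a} ∈ sets

variable (𝕂 : Type*) [RCLike 𝕂]

/-- The set of candidate values for the norm of `x` in the combinatorial space. -/
def normValues (F : CombFamily ι) (x : ι →₀ 𝕂) : Set ℝ :=
  (fun s : Finset ι => ∑ a ∈ s, ‖x a‖) '' F.sets

lemma normValues_nonempty (F : CombFamily ι) (x : ι →₀ 𝕂) : (normValues 𝕂 F x).Nonempty :=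
  ⟨∑ a ∈ (∅ : Finset ι), ‖x a‖, ⟨∅, F.empty_mem, rfl⟩⟩

lemma normValues_bddAbove (F : CombFamily ι) (x : ι →₀ 𝕂) : BddAbove (normValues 𝕂 F x) := by
  refine ⟨∑ a ∈ x.support, ‖x a‖, ?_⟩
  rintro r ⟨s, _, rfl⟩
  dsimp only
  have h1 : ∑ a ∈ s, ‖x a‖ = ∑ a ∈ s ∩ x.support, ‖x a‖ := by
    refine (Finset.sum_subset (Finset.inter_subset_left) ?_).symm
    intro a ha hna
    have : x a = 0 := by
      by_contra h
      exact hna (Finset.mem_inter.2 ⟨ha, Finsupp.mem_support_iff.2 h⟩)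
    simp [this]
  rw [h1]
  exact Finset.sum_le_sum_of_subset_of_nonneg Finset.inter_subset_right
    (fun a _ _ => norm_nonneg _)

/-- The norm of the combinatorial space `X_F`:
`‖x‖ = sup { ∑_{a ∈ s} |x a| : s ∈ F }`. -/
def combNorm (F : CombFamily ι) (x : ι →₀ 𝕂) : ℝ := sSup (normValues 𝕂 F x)

lemma sum_le_combNorm (F : CombFamily ι) (x : ι →₀ 𝕂) {s : Finset ι} (hs : s ∈ F.sets) :
    ∑ a ∈ s, ‖x a‖ ≤ combNorm 𝕂 F x :=
  le_csSup (normValues_bddAbove 𝕂 F x) ⟨s, hs, rfl⟩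

lemma combNorm_le (F : CombFamily ι) (x : ι →₀ 𝕂) {c : ℝ}
    (h : ∀ s ∈ F.sets, ∑ a ∈ s, ‖x a‖ ≤ c) : combNorm 𝕂 F x ≤ c :=
  csSup_le (normValues_nonempty 𝕂 F x) (by rintro r ⟨s, hs, rfl⟩; exact h s hs)

/-- The space of finitely supported functions `ι →₀ 𝕂`, regarded as a normed space
with the norm induced by the family `F`. -/
def C00 (F : CombFamily ι) (𝕂 : Type*) [RCLike 𝕂] : Type _ := ι →₀ 𝕂

variable {𝕂} in
/-- The identity map from `C00 F 𝕂` to `ι →₀ 𝕂`. -/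
def C00.toFinsupp {F : CombFamily ι} (x : C00 F 𝕂) : ι →₀ 𝕂 := x

variable {𝕂} in
/-- The identity map from `ι →₀ 𝕂` to `C00 F 𝕂`. -/
def C00.of (F : CombFamily ι) (x : ι →₀ 𝕂) : C00 F 𝕂 := x

instance (F : CombFamily ι) : AddCommGroup (C00 F 𝕂) :=
  inferInstanceAs (AddCommGroup (ι →₀ 𝕂))

instance (F : CombFamily ι) : Module 𝕂 (C00 F 𝕂) :=
  inferInstanceAs (Module 𝕂 (ι →₀ 𝕂))

variable {𝕂}

lemma C00.toFinsupp_add {F : CombFamily ι} (x y : C00 F 𝕂) :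
    (x + y).toFinsupp = x.toFinsupp + y.toFinsupp := rfl

lemma C00.toFinsupp_neg {F : CombFamily ι} (x : C00 F 𝕂) :
    (-x).toFinsupp = -x.toFinsupp := rfl

lemma C00.toFinsupp_smul {F : CombFamily ι} (c : 𝕂) (x : C00 F 𝕂) :
    (c • x).toFinsupp = c • x.toFinsupp := rfl

variable (𝕂)

instance C00.instNormedAddCommGroup (F : CombFamily ι) : NormedAddCommGroup (C00 F 𝕂) :=
  AddGroupNorm.toNormedAddCommGroup
    { toFun := fun x => combNorm 𝕂 F x.toFinsupp
      map_zero' := by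
        refine le_antisymm (combNorm_le 𝕂 F _ ?_) ?_
        · intro s _
          have : (0 : C00 F 𝕂).toFinsupp = 0 := rfl
          simp [this]
        · have := sum_le_combNorm 𝕂 F (0 : C00 F 𝕂).toFinsupp F.empty_mem
          simpa using this
      add_le' := by
        intro x y
        refine combNorm_le 𝕂 F _ ?_
        intro s hs
        rw [C00.toFinsupp_add]
        calc ∑ a ∈ s, ‖(x.toFinsupp + y.toFinsupp) a‖
            ≤ ∑ a ∈ s, (‖x.toFinsupp a‖ + ‖y.toFinsupp a‖) := by
              refine Finset.sum_le_sum ?_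
              intro a _
              rw [Finsupp.add_apply]
              exact norm_add_le _ _
          _ = (∑ a ∈ s, ‖x.toFinsupp a‖) + ∑ a ∈ s, ‖y.toFinsupp a‖ :=
              Finset.sum_add_distrib
          _ ≤ combNorm 𝕂 F x.toFinsupp + combNorm 𝕂 F y.toFinsupp :=
              add_le_add (sum_le_combNorm 𝕂 F _ hs) (sum_le_combNorm 𝕂 F _ hs)
      neg' := by
        intro x
        rw [C00.toFinsupp_neg]
        have hfun : (fun s : Finset ι => ∑ a ∈ s, ‖(-x.toFinsupp) a‖)
            = fun s : Finset ι => ∑ a ∈ s, ‖x.toFinsupp a‖ := by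
          funext s
          refine Finset.sum_congr rfl fun a _ => ?_
          rw [Finsupp.neg_apply, norm_neg]
        unfold combNorm normValues
        rw [hfun]
      eq_zero_of_map_eq_zero' := by
        intro x hx
        have hα : ∀ a : ι, x.toFinsupp a = 0 := by
          intro a
          have h1 : ‖x.toFinsupp a‖ ≤ combNorm 𝕂 F x.toFinsupp := by
            have := sum_le_combNorm 𝕂 F x.toFinsupp (F.singleton_mem a)
            simpa using this
          rw [hx] at h1
          exact norm_eq_zero.1 (le_antisymm h1 (norm_nonneg _))
        have : x.toFinsupp = 0 := Finsupp.ext hα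
        exact this }

lemma C00.norm_def {F : CombFamily ι} (x : C00 F 𝕂) : ‖x‖ = combNorm 𝕂 F x.toFinsupp := rfl

instance C00.instNormedSpace (F : CombFamily ι) : NormedSpace 𝕂 (C00 F 𝕂) where
  norm_smul_le c x := by
    rw [C00.norm_def, C00.norm_def, C00.toFinsupp_smul]
    refine combNorm_le 𝕂 F _ ?_
    intro s hs
    have : ∑ a ∈ s, ‖(c • x.toFinsupp) a‖ = ‖c‖ * ∑ a ∈ s, ‖x.toFinsupp a‖ := by
      rw [Finset.mul_sum]
      refine Finset.sum_congr rfl ?_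
      intro a _
      rw [Finsupp.smul_apply]
      exact norm_smul c _
    rw [this]
    exact mul_le_mul_of_nonneg_left (sum_le_combNorm 𝕂 F _ hs) (norm_nonneg c)

/-- The combinatorial Banach space `X_F`: the completion of `c₀₀(ι)` under the norm
induced by the family `F`. -/
def XF (F : CombFamily ι) (𝕂 : Type*) [RCLike 𝕂] : Type _ :=
  UniformSpace.Completion (C00 F 𝕂)

instance (F : CombFamily ι) : NormedAddCommGroup (XF F 𝕂) :=
  inferInstanceAs (NormedAddCommGroup (UniformSpace.Completion (C00 F 𝕂)))

instance (F : CombFamily ι) : NormedSpace 𝕂 (XF F 𝕂) :=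
  inferInstanceAs (NormedSpace 𝕂 (UniformSpace.Completion (C00 F 𝕂)))

instance (F : CombFamily ι) : CompleteSpace (XF F 𝕂) :=
  inferInstanceAs (CompleteSpace (UniformSpace.Completion (C00 F 𝕂)))

/-- The canonical unit vector basis `(e_a)` of the combinatorial space `X_F`. -/
def unitVec (F : CombFamily ι) (a : ι) : XF F 𝕂 :=
  (UniformSpace.Completion.toComplₗᵢ (𝕜 := 𝕂) (E := C00 F 𝕂))
    (C00.of F (Finsupp.single a 1))

/-- The coordinate functional `e_a^*` on `c₀₀`, as a continuous linear map. -/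
def coordC00 (F : CombFamily ι) (a : ι) : C00 F 𝕂 →L[𝕂] 𝕂 :=
  LinearMap.mkContinuous
    { toFun := fun x => x.toFinsupp a
      map_add' := fun _ _ => rfl
      map_smul' := fun _ _ => rfl } 1
    (by
      intro x
      have h1 : ‖x.toFinsupp a‖ ≤ combNorm 𝕂 F x.toFinsupp := by
        have := sum_le_combNorm 𝕂 F x.toFinsupp (F.singleton_mem a)
        simpa using this
      rw [C00.norm_def]
      show ‖x.toFinsupp a‖ ≤ 1 * combNorm 𝕂 F x.toFinsupp
      simpa using h1)

/-- The coordinate functional `e_a^*` of the dual of the combinatorial space `X_F`. -/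
def coordFn (F : CombFamily ι) (a : ι) : StrongDual 𝕂 (XF F 𝕂) :=
  (coordC00 𝕂 F a).extend (UniformSpace.Completion.toComplL : C00 F 𝕂 →L[𝕂] XF F 𝕂)

/-- An extreme point of a convex set `B`: a point of `B` which is not a proper convex
combination of two distinct points of `B`. -/
def IsExtremePoint {E : Type*} [AddCommGroup E] [Module 𝕂 E] (B : Set E) (x : E) : Prop :=
  x ∈ B ∧ ∀ x₁ ∈ B, ∀ x₂ ∈ B, ∀ t : ℝ, 0 < t → t < 1 →
    x = (t : 𝕂) • x₁ + ((1 - t : ℝ) : 𝕂) • x₂ → x₁ = x₂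

/-! A weak*-functional is determined by its values on the unit vectors, and evaluation at them
is weak*-continuous into `𝕂^ι`. The set in question is the preimage of the set of `v : ι → 𝕂`
with entries in `{0} ∪ sphere 0 1` whose support lies in `F`. That set is closed: on such
vectors the support indicator `ι → Bool` is continuous, because `0` is isolated in
`{0} ∪ sphere 0 1`, and `{χ_s : s ∈ F}` is closed by compactness of `F`. -/

open Topology Metric

theorem continuousOn_decide_ne_of_isolated {X : Type*} [TopologicalSpace X] [T1Space X]
    {K : Set X} {x : X} (hx : ∀ᶠ y in 𝓝[K] x, y = x) :
    ContinuousOn (fun y => decide (y ≠ x)) K := by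
  intro y _
  by_cases hyx : y = x
  · subst hyx
    refine tendsto_const_nhds.congr' ?_
    filter_upwards [hx] with z hz
    simp [hz]
  · refine tendsto_const_nhds.congr' ?_
    filter_upwards [nhdsWithin_le_nhds (isOpen_ne.mem_nhds hyx)] with z hz
    simp [hyx, hz]

theorem eventually_nhdsWithin_insert_zero_sphere {E : Type*} [SeminormedAddCommGroup E]
    {r : ℝ} (hr : 0 < r) : ∀ᶠ y in 𝓝[insert 0 (sphere (0 : E) r)] 0, y = 0 := by
  filter_upwards [inter_mem_nhdsWithin _ (ball_mem_nhds (0 : E) hr)] with y ⟨hK, hball⟩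
  rcases hK with h | h
  · exact h
  · simp_all

def supportIndicator {ι E : Type*} [Zero E] (v : ι → E) : ι → Bool :=
  fun b => decide (v b ≠ 0)

theorem isClosed_pi_insert_zero_sphere_inter_supportIndicator_preimage {ι E : Type*}
    [NormedAddCommGroup E] {r : ℝ} (hr : 0 < r) {C : Set (ι → Bool)} (hC : IsClosed C) :
    IsClosed ((Set.univ.pi fun _ : ι => insert (0 : E) (sphere 0 r)) ∩
      supportIndicator ⁻¹' C) := by
  set K := Set.univ.pi fun _ : ι => insert (0 : E) (sphere 0 r)
  have hK : IsClosed K := isClosed_set_pi fun _ _ => by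
    rw [Set.insert_eq]; exact isClosed_singleton.union isClosed_sphere
  have hcont : ContinuousOn supportIndicator K :=
    continuousOn_pi.2 fun b =>
      (continuousOn_decide_ne_of_isolated (eventually_nhdsWithin_insert_zero_sphere hr)).comp
        (continuous_apply b).continuousOn fun v hv => hv b trivial
  exact hcont.preimage_isClosed_of_isClosed hK hC

variable {𝕂}

theorem coordFn_unitVec (F : CombFamily ι) (a b : ι) :
    coordFn 𝕂 F a (unitVec 𝕂 F b) = if b = a then 1 else 0 := by
  have hextend : coordFn 𝕂 F a (unitVec 𝕂 F b)
      = coordC00 𝕂 F a (C00.of F (Finsupp.single b 1)) :=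
    ContinuousLinearMap.extend_eq _ UniformSpace.Completion.denseRange_coe
      (UniformSpace.Completion.isUniformInducing_coe _) _
  rw [hextend]
  exact Finsupp.single_apply

theorem sum_smul_coordFn_apply_unitVec (F : CombFamily ι) (s : Finset ι) (θ : ι → 𝕂) (b : ι) :
    (∑ a ∈ s, θ a • StrongDual.toWeakDual (coordFn 𝕂 F a)) (unitVec 𝕂 F b)
      = if b ∈ s then θ b else 0 := by
  simp_rw [← map_smul, ← map_sum, StrongDual.toWeakDual_apply, sum_apply,
    smul_apply, coordFn_unitVec]
  simp

theorem XF.continuousLinearMap_ext {M : Type*} [AddCommMonoid M] [Module 𝕂 M]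
    [TopologicalSpace M] [T2Space M] {F : CombFamily ι} {f g : XF F 𝕂 →L[𝕂] M}
    (h : ∀ a, f (unitVec 𝕂 F a) = g (unitVec 𝕂 F a)) : f = g := by
  let ι₀ : C00 F 𝕂 →L[𝕂] XF F 𝕂 := UniformSpace.Completion.toComplL
  have hC00 : ((f ∘L ι₀ : C00 F 𝕂 →L[𝕂] M) : C00 F 𝕂 →ₗ[𝕂] M) =
      (g ∘L ι₀ : C00 F 𝕂 →L[𝕂] M) :=
    Finsupp.lhom_ext' (α := ι) (M := 𝕂) fun a => LinearMap.ext_ring (h a)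
  ext x
  exact UniformSpace.Completion.ext' f.continuous g.continuous (LinearMap.congr_fun hC00) x

theorem exists_eq_sum_smul_coordFn_iff {F : CombFamily ι} {φ : WeakDual 𝕂 (XF F 𝕂)} :
    (∃ s ∈ F.sets, ∃ θ : ι → 𝕂, (∀ a ∈ s, ‖θ a‖ = 1) ∧
        φ = ∑ a ∈ s, θ a • StrongDual.toWeakDual (coordFn 𝕂 F a)) ↔
      (fun b => φ (unitVec 𝕂 F b)) ∈
        (Set.univ.pi fun _ => insert 0 (sphere 0 1)) ∩ supportIndicator ⁻¹' chiImg F.sets := by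
  constructor
  · rintro ⟨s, hs, θ, hθ, rfl⟩
    refine ⟨fun b _ => ?_, s, hs, funext fun b => ?_⟩
    · simp only [sum_smul_coordFn_apply_unitVec]
      split_ifs with hb
      · exact Or.inr (mem_sphere_zero_iff_norm.2 (hθ b hb))
      · exact Or.inl rfl
    · simp only [chi, supportIndicator, sum_smul_coordFn_apply_unitVec, decide_eq_decide]
      split_ifs with hb
      · exact iff_of_true hb (norm_ne_zero_iff.1 (by simp [hθ b hb]))
      · exact iff_of_false hb (not_not.2 rfl)
  · rintro ⟨hval, s, hs, hchi⟩
    have hmem : ∀ b, b ∈ s ↔ φ (unitVec 𝕂 F b) ≠ 0 := fun b => by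
      simpa only [chi, supportIndicator, decide_eq_decide] using congrFun hchi b
    refine ⟨s, hs, fun b => φ (unitVec 𝕂 F b), fun b hb => ?_, ?_⟩
    · simpa [(hmem b).1 hb] using hval b trivial
    · refine XF.continuousLinearMap_ext fun b => ?_
      refine ((sum_smul_coordFn_apply_unitVec F s _ b).trans ?_).symm
      split_ifs with hb
      · rfl
      · exact (not_not.1 (mt (hmem b).2 hb)).symm

theorem statement4_general {ι : Type*} {𝕂 : Type*} [RCLike 𝕂]
    (F : CombFamily ι)
    (hFc : IsCompactFam F.sets) :
    IsClosed {φ : WeakDual 𝕂 (XF F 𝕂) |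
      ∃ s ∈ F.sets, ∃ θ : ι → 𝕂, (∀ a ∈ s, ‖θ a‖ = 1) ∧
        φ = ∑ a ∈ s, θ a • StrongDual.toWeakDual (coordFn 𝕂 F a)} := by
  have hclosed :=
    (isClosed_pi_insert_zero_sphere_inter_supportIndicator_preimage (E := 𝕂) one_pos hFc).preimage
      (continuous_pi fun b => WeakDual.eval_continuous (unitVec 𝕂 F b))
  convert hclosed using 1
  ext φ
  exact exists_eq_sum_smul_coordFn_iff

/-- For a compact hereditary family `F` on an infinite cardinal, the set
`{ Σ_{ξ∈s} θ_ξ e_ξ^* : s ∈ F, |θ_ξ| = 1 }` is weak*-closed in the dual of `X_F`. -/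
theorem statement4 {ι : Type*} [Infinite ι] {𝕂 : Type*} [RCLike 𝕂]
    (F : CombFamily ι)
    (hFc : IsCompactFam F.sets) (hFh : IsHereditary F.sets) :
    IsClosed {φ : WeakDual 𝕂 (XF F 𝕂) |
      ∃ s ∈ F.sets, ∃ θ : ι → 𝕂, (∀ a ∈ s, ‖θ a‖ = 1) ∧
        φ = ∑ a ∈ s, θ a • StrongDual.toWeakDual (coordFn 𝕂 F a)} :=
  statement4_general F hFc
end
end

section
/- Let s be a finite subset of ℕ and let σ[s] be a spread of s, i.e. σ : s → ℕ is an injection with σ(i) ≥ i for all i ∈ s. Then there exists an injection σ' : s → ℕ with σ'(i) ≥ i for all i ∈ s such that σ'[s] = σ[s] and σ'(i) = i for every i ∈ s ∩ σ[s]. -/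
open scoped Classical

theorem statement8_aux (s : Finset ℕ) :
    ∀ n, ∀ σ : ℕ → ℕ, Set.InjOn σ ↑s → (∀ i ∈ s, i ≤ σ i) →
      ((s ∩ Finset.image σ s).filter (fun i => σ i ≠ i)).card = n →
    ∃ σ' : ℕ → ℕ, Set.InjOn σ' ↑s ∧ (∀ i ∈ s, i ≤ σ' i) ∧
      Finset.image σ' s = Finset.image σ s ∧
      ∀ i ∈ s ∩ Finset.image σ s, σ' i = i := by
  intro n
  induction n using Nat.strong_induction_on with
  | _ n ih =>
    intro σ hinj hge hcard
    by_cases hemp : ((s ∩ Finset.image σ s).filter (fun i => σ i ≠ i)) = ∅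
    · refine ⟨σ, hinj, hge, rfl, ?_⟩
      intro i hi
      by_contra h
      have : i ∈ ((s ∩ Finset.image σ s).filter (fun i => σ i ≠ i)) :=
        Finset.mem_filter.2 ⟨hi, h⟩
      simp [hemp] at this
    · obtain ⟨i, hi⟩ := Finset.nonempty_iff_ne_empty.2 hemp
      rw [Finset.mem_filter, Finset.mem_inter] at hi
      obtain ⟨⟨his, hiim⟩, hine⟩ := hi
      obtain ⟨j, hjs, hji⟩ := Finset.mem_image.1 hiim
      have hjne : j ≠ i := by
        rintro rfl; exact hine hji
      set τ : ℕ → ℕ := fun k => Equiv.swap (σ i) i (σ k) with hτ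
      have hτi : τ i = i := Equiv.swap_apply_left _ _
      have hτj : τ j = σ i := by simp [hτ, hji]
      have hτk : ∀ k ∈ s, k ≠ i → k ≠ j → τ k = σ k := by
        intro k hk hki hkj
        refine Equiv.swap_apply_of_ne_of_ne ?_ ?_
        · exact fun h => hki (hinj hk his h)
        · exact fun h => hkj (hinj hk hjs (h.trans hji.symm))
      have hinj' : Set.InjOn τ ↑s := fun a ha b hb h =>
        hinj ha hb ((Equiv.swap (σ i) i).injective h)
      have hge' : ∀ k ∈ s, k ≤ τ k := by
        intro k hk
        rcases eq_or_ne k i with rfl | hki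
        · simp [hτi]
        rcases eq_or_ne k j with rfl | hkj
        · rw [hτj]; exact le_trans (hji ▸ hge k hk) (hge i his)
        · rw [hτk k hk hki hkj]; exact hge k hk
      have himg : Finset.image τ s = Finset.image σ s := by
        have : Finset.image τ s = (Finset.image σ s).image (Equiv.swap (σ i) i) := by
          rw [Finset.image_image]; rfl
        have hsupp : { a | Equiv.swap (σ i) i a ≠ a } ⊆ ↑(Finset.image σ s) := by
          intro x hx
          simp only [Set.mem_setOf_eq] at hx
          rcases Equiv.swap_apply_ne_self_iff.1 hx with ⟨_, h | h⟩
          · subst h; exact Finset.mem_coe.2 (Finset.mem_image_of_mem σ his)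
          · subst h; exact Finset.mem_coe.2 hiim
        have hmap := Finset.map_perm (σ := Equiv.swap (σ i) i) hsupp
        rw [Finset.map_eq_image] at hmap
        rw [this]
        exact hmap
      have hsub : ((s ∩ Finset.image τ s).filter (fun k => τ k ≠ k)) ⊆
          ((s ∩ Finset.image σ s).filter (fun k => σ k ≠ k)).erase i := by
        intro k hk
        rw [Finset.mem_filter, Finset.mem_inter, himg] at hk
        obtain ⟨⟨hks, hkim⟩, hkne⟩ := hk
        have hki : k ≠ i := by rintro rfl; exact hkne hτi
        refine Finset.mem_erase.2 ⟨hki, Finset.mem_filter.2 ⟨Finset.mem_inter.2 ⟨hks, hkim⟩, ?_⟩⟩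
        rcases eq_or_ne k j with rfl | hkj
        · rw [hji]; exact (Ne.symm hjne)
        · rw [← hτk k hks hki hkj]; exact hkne
      have hlt : ((s ∩ Finset.image τ s).filter (fun k => τ k ≠ k)).card < n := by
        calc ((s ∩ Finset.image τ s).filter (fun k => τ k ≠ k)).card
            ≤ (((s ∩ Finset.image σ s).filter (fun k => σ k ≠ k)).erase i).card :=
              Finset.card_le_card hsub
          _ < ((s ∩ Finset.image σ s).filter (fun k => σ k ≠ k)).card :=
              Finset.card_erase_lt_of_mem (Finset.mem_filter.2
                ⟨Finset.mem_inter.2 ⟨his, hiim⟩, hine⟩)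
          _ = n := hcard
      obtain ⟨σ', h1, h2, h3, h4⟩ := ih _ hlt τ hinj' hge' rfl
      exact ⟨σ', h1, h2, h3.trans himg, fun k hk => h4 k (by rwa [himg])⟩

noncomputable section

/-- Given a finite `s ⊆ ℕ` and a spread `σ[s]` of `s`, there is a spread
`σ'[s]` of `s` with `σ'[s] = σ[s]` and `σ' i = i` for every `i ∈ s ∩ σ[s]`. -/
theorem statement8 (s : Finset ℕ) (σ : ℕ → ℕ)
    (hinj : Set.InjOn σ ↑s) (hge : ∀ i ∈ s, i ≤ σ i) :
    ∃ σ' : ℕ → ℕ, Set.InjOn σ' ↑s ∧ (∀ i ∈ s, i ≤ σ' i) ∧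
      Finset.image σ' s = Finset.image σ s ∧
      ∀ i ∈ s ∩ Finset.image σ s, σ' i = i := by
  exact statement8_aux s _ σ hinj hge rfl
end
end

section
/- Let F be a hereditary and spreading family on ℕ, let n ∈ ℕ, let s ∈ F with |s| = n, and let t be a spread of s (so that t ∈ F and |t| = n). For a set u ∈ F put I_u = { i ∈ ℕ : {i} ∪ u ∉ F }. Then the cardinality of I_t is at most the cardinality of I_s. -/
open scoped Classical

noncomputable section

/-!
A finite set `b` is a spread of `a` exactly when `|a| = |b|` and, for every `m`, `b` has at
most as many elements below `m` as `a`. Enumerate `I_t` increasingly and send its `k`-th element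
`i` to the `k`-th element `j` of `ℕ ∖ s`. Since `t ∈ F`, the set `I_t` avoids `t`, so at least
`k` elements of `ℕ ∖ t` lie below `i`, while exactly `k` elements of `ℕ ∖ s` lie below `j`;
by the counting criterion (and `t` being a spread of `s`) `insert i t` is then a spread of
`insert j s`. As `F` is spreading and `insert i t ∉ F`, also `insert j s ∉ F`, so `i ↦ j` is an
increasing map from `I_t` into `I_s`.
-/

open Nat Finset

lemma Nat.count_mem_eq_card_filter_lt (u : Finset ℕ) (m : ℕ) :
    count (· ∈ u) m = #{x ∈ u | x < m} := by
  rw [count_eq_card_filter_range]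
  congr 1
  ext x
  simp only [mem_filter, mem_range]
  tauto

lemma Nat.count_mem_add_count_notMem (u : Finset ℕ) (m : ℕ) :
    count (· ∈ u) m + count (· ∉ u) m = m := by
  simp only [count_eq_card_filter_range]
  simpa using card_filter_add_card_filter_not (s := range m) (p := (· ∈ u))

lemma Nat.count_mem_insert {a : ℕ} {u : Finset ℕ} (ha : a ∉ u) (m : ℕ) :
    count (· ∈ insert a u) m = count (· ∈ u) m + if a < m then 1 else 0 := by
  simp only [count_mem_eq_card_filter_lt, filter_insert]
  split_ifs
  · exact card_insert_of_notMem fun h => ha (mem_of_mem_filter _ h)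
  · rfl

lemma IsSpread.card_eq {ι : Type*} [LinearOrder ι] {s t : Finset ι} (h : IsSpread s t) :
    #t = #s := by
  obtain ⟨σ, hinj, -, rfl⟩ := h
  exact card_image_of_injOn hinj

lemma IsSpread.count_le {s t : Finset ℕ} (h : IsSpread s t) (m : ℕ) :
    count (· ∈ t) m ≤ count (· ∈ s) m := by
  obtain ⟨σ, hinj, hle, rfl⟩ := h
  simp only [count_mem_eq_card_filter_lt, filter_image]
  refine card_image_le.trans (card_le_card fun x hx => ?_)
  obtain ⟨hxs, hxm⟩ := mem_filter.mp hx
  exact mem_filter.mpr ⟨hxs, (hle x hxs).trans_lt hxm⟩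

lemma Nat.count_mem_lt_card {u : Finset ℕ} {a : ℕ} (ha : a ∈ u) : count (· ∈ u) a < #u := by
  simpa using count_lt_card u.finite_toSet ha

lemma Nat.nth_mem_of_lt_card_finset {u : Finset ℕ} {k : ℕ} (hk : k < #u) : nth (· ∈ u) k ∈ u :=
  nth_mem_of_lt_card u.finite_toSet (by simpa using hk)

lemma Nat.count_mem_nth_succ {u : Finset ℕ} {k : ℕ} (hk : k < #u) :
    count (· ∈ u) (nth (· ∈ u) k + 1) = k + 1 :=
  count_nth_succ fun _ => by simpa using hk

lemma isSpread_of_count_le {s t : Finset ℕ} (hcard : #t = #s)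
    (hcount : ∀ m, count (· ∈ t) m ≤ count (· ∈ s) m) : IsSpread s t := by
  set σ : ℕ → ℕ := fun a => nth (· ∈ t) (count (· ∈ s) a)
  have hlt : ∀ a ∈ s, count (· ∈ s) a < #t := fun a ha => hcard ▸ count_mem_lt_card ha
  have hinj : Set.InjOn σ s := fun a ha b hb hab =>
    count_injective (p := (· ∈ s)) ha hb
      (nth_injOn t.finite_toSet (by simpa using hlt a ha) (by simpa using hlt b hb) hab)
  refine ⟨σ, hinj, fun a ha => ?_, ?_⟩
  · by_contra! hσa
    have := (count_mem_nth_succ (hlt a ha)).symm.trans_le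
      ((count_monotone _ hσa).trans (hcount a))
    omega
  · refine (eq_of_subset_of_card_le (fun x hx => ?_) ?_).symm
    · obtain ⟨a, ha, rfl⟩ := mem_image.mp hx
      exact nth_mem_of_lt_card_finset (hlt a ha)
    · rw [Finset.card_image_of_injOn hinj, hcard]

lemma IsSpread.insert_insert {s t : Finset ℕ} {i j : ℕ} (hst : IsSpread s t) (hi : i ∉ t)
    (hj : j ∉ s) (hji : count (· ∉ s) j ≤ count (· ∉ t) i) :
    IsSpread (insert j s) (insert i t) := by
  refine isSpread_of_count_le ?_ fun m => ?_
  · rw [card_insert_of_notMem hi, card_insert_of_notMem hj, hst.card_eq]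
  rw [count_mem_insert hi, count_mem_insert hj]
  have hts := hst.count_le m
  split_ifs with him hjm
  · omega
  · have hgap : count (· ∉ s) m < count (· ∉ t) m := calc
      count (· ∉ s) m ≤ count (· ∉ s) j := count_monotone _ (not_lt.mp hjm)
      _ ≤ count (· ∉ t) i := hji
      _ < count (· ∉ t) (i + 1) := count_lt_count_succ_iff.mpr hi
      _ ≤ count (· ∉ t) m := count_monotone _ him
    have := count_mem_add_count_notMem s m
    have := count_mem_add_count_notMem t m
    omega
  · omega
  · omega

theorem statement10_general (F : Set (Finset ℕ)) (hs : IsSpreading F) (s : Finset ℕ) (hsF : s ∈ F)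
    (t : Finset ℕ) (ht : IsSpread s t) :
    {i : ℕ | insert i t ∉ F}.encard ≤ {i : ℕ | insert i s ∉ F}.encard := by
  set P : ℕ → Prop := fun i => insert i t ∉ F
  have hPt : ∀ i, P i → i ∉ t := fun i hi hit =>
    hi (by rw [insert_eq_self.mpr hit]; exact hs s hsF t ht)
  have hinf : (Set.ofPred (· ∉ s)).Infinite := s.finite_toSet.infinite_compl
  set g : ℕ → ℕ := fun i => nth (· ∉ s) (count P i)
  have hg : StrictMonoOn g {i | P i} := fun a ha _ _ hab =>
    nth_strictMono hinf (count_strict_mono ha hab)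
  refine Set.encard_le_encard_of_injOn (fun i hi hgi => hi ?_) hg.injOn
  refine hs _ hgi _ (ht.insert_insert (hPt i hi) (nth_mem_of_infinite hinf _) ?_)
  rw [count_nth_of_infinite hinf]
  exact count_mono_left fun k _ => hPt k

/-- Let `F` be a hereditary spreading family on `ℕ`, let `s ∈ F` with
`|s| = n` and let `t` be a spread of `s`. With `I_u = {i : {i} ∪ u ∉ F}`, we have
`|I_t| ≤ |I_s|`. -/
theorem statement10 (F : Set (Finset ℕ))
    (hfam : IsFam F) (hh : IsHereditary F) (hs : IsSpreading F)
    (n : ℕ) (s : Finset ℕ) (hsF : s ∈ F) (hcard : s.card = n)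
    (t : Finset ℕ) (ht : IsSpread s t) :
    {i : ℕ | insert i t ∉ F}.encard ≤ {i : ℕ | insert i s ∉ F}.encard :=
  statement10_general F hs s hsF t ht
end
end

section
/- Let F be a compact family on an infinite cardinal κ such that the map α ↦ rk_F({α}) is injective on κ. Then the only permutation π of κ satisfying {π[s] : s ∈ F} = F is the identity map. -/
open scoped Classical

noncomputable section

/-- The `o`-th Cantor–Bendixson derivative of a set `A` in a topological space. -/
noncomputable def cbDeriv {X : Type*} [TopologicalSpace X] (A : Set X) (o : Ordinal) :
    Set X :=
  A ∩ ⋂ b : Set.Iio o, derivedSet (cbDeriv A b.1)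
termination_by o
decreasing_by exact b.2

/-- The Cantor–Bendixson rank of a point `x` relative to a set `A`: the largest ordinal `o`
such that `x` belongs to the `o`-th Cantor–Bendixson derivative of `A`. -/
noncomputable def cbRank {X : Type*} [TopologicalSpace X] (A : Set X) (x : X) : Ordinal :=
  sSup {o | x ∈ cbDeriv A o}


theorem Homeomorph.image_derivedSet' {X Y : Type*} [TopologicalSpace X] [TopologicalSpace Y]
    (e : X ≃ₜ Y) (A : Set X) : e '' derivedSet A = derivedSet (e '' A) := by
  apply Set.Subset.antisymm
  · exact e.continuous.image_derivedSet e.injective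
  · intro y hy
    have h2 := e.symm.continuous.image_derivedSet e.symm.injective (A := e '' A)
    have : e.symm y ∈ derivedSet (e.symm '' (e '' A)) := h2 ⟨y, hy, rfl⟩
    rw [Set.image_image] at this
    simp only [Homeomorph.symm_apply_apply, Set.image_id'] at this
    exact ⟨e.symm y, this, e.apply_symm_apply y⟩

theorem image_cbDeriv {X : Type*} [TopologicalSpace X] (e : X ≃ₜ X) (A : Set X)
    (hA : e '' A = A) (o : Ordinal) : e '' cbDeriv A o = cbDeriv A o := by
  induction o using Ordinal.induction with
  | h o IH =>
    unfold cbDeriv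
    rw [Set.image_inter e.injective, hA]
    congr 1
    rw [Set.image_iInter e.bijective]
    exact Set.iInter_congr fun b => by rw [e.image_derivedSet', IH b.1 b.2]

theorem mem_cbDeriv_iff_image {X : Type*} [TopologicalSpace X] (e : X ≃ₜ X) (A : Set X)
    (hA : e '' A = A) (o : Ordinal) (x : X) : e x ∈ cbDeriv A o ↔ x ∈ cbDeriv A o := by
  conv_lhs => rw [← image_cbDeriv e A hA o]
  exact e.injective.mem_set_image

theorem cbRank_image {X : Type*} [TopologicalSpace X] (e : X ≃ₜ X) (A : Set X)
    (hA : e '' A = A) (x : X) : cbRank A (e x) = cbRank A x := by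
  unfold cbRank
  congr 1
  ext o
  exact mem_cbDeriv_iff_image e A hA o x


/-- If `F` is a compact family on an infinite cardinal such that
`a ↦ rk_F({a})` is injective, then the only permutation `π` with `{π[s] : s ∈ F} = F`
is the identity. -/
theorem statement12 {ι : Type*} [Infinite ι] (F : Set (Finset ι))
    (hfam : IsFam F) (hc : IsCompactFam F)
    (hinj : Function.Injective fun a : ι => cbRank (chiImg F) (chi ({a} : Finset ι)))
    (π : Equiv.Perm ι) (hπ : permImg π F = F) :
    π = Equiv.refl ι := by
  -- the homeomorphism of the cube induced by π
  let e : (ι → Bool) ≃ₜ (ι → Bool) :=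
    { toEquiv := Equiv.arrowCongr π (Equiv.refl Bool)
      continuous_toFun := continuous_pi fun i => continuous_apply (π.symm i)
      continuous_invFun := continuous_pi fun i => continuous_apply (π i) }
  have hchi : ∀ s : Finset ι, e (chi s) = chi (Finset.image π s) := by
    intro s
    funext a
    show chi s (π.symm a) = chi (Finset.image π s) a
    unfold chi
    simp only [decide_eq_decide, Finset.mem_image]
    constructor
    · intro h; exact ⟨π.symm a, h, π.apply_symm_apply a⟩
    · rintro ⟨b, hb, rfl⟩; simpa using hb
  have hA : e '' chiImg F = chiImg F := by
    conv_rhs => rw [← hπ]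
    unfold chiImg permImg
    rw [← Set.image_comp, ← Set.image_comp]
    exact Set.image_congr fun s _ => hchi s
  apply Equiv.ext
  intro a
  apply hinj
  show cbRank (chiImg F) (chi ({π a} : Finset ι)) = cbRank (chiImg F) (chi ({a} : Finset ι))
  have : (chi ({π a} : Finset ι)) = e (chi ({a} : Finset ι)) := by
    rw [hchi]; simp
  rw [this, cbRank_image e _ hA]
end
end

section
/- Let F = { s ⊆ ℕ : |s| ≤ 2 } ∖ { {n, n+1} : n ∈ ℕ }. Then F is compact and hereditary, and F is not π-homeomorphic to any regular family: for every regular family G on ℕ and every permutation π of ℕ, G ≠ {π[s] : s ∈ F}. -/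
open scoped Classical

noncomputable section

private lemma pair_ne_consec (n : ℕ) : ({0, 2} : Finset ℕ) ≠ ({n, n + 1} : Finset ℕ) := by
  intro h
  have h0 : n ∈ ({0, 2} : Finset ℕ) := by rw [h]; simp
  have h1 : n + 1 ∈ ({0, 2} : Finset ℕ) := by rw [h]; simp
  simp only [Finset.mem_insert, Finset.mem_singleton] at h0 h1
  omega

/-- The family `F = [ℕ]^{≤2} ∖ {{n, n+1} : n ∈ ℕ}` is compact and
hereditary, but not π-homeomorphic to any regular family. -/
theorem statement17 :
    IsCompactFam ({s : Finset ℕ | s.card ≤ 2} \ {s : Finset ℕ | ∃ n : ℕ, s = {n, n + 1}}) ∧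
    IsHereditary ({s : Finset ℕ | s.card ≤ 2} \ {s : Finset ℕ | ∃ n : ℕ, s = {n, n + 1}}) ∧
    ∀ G : Set (Finset ℕ), IsFam G → IsCompactFam G → IsHereditary G → IsSpreading G →
      ∀ π : Equiv.Perm ℕ,
        G ≠ permImg π
          ({s : Finset ℕ | s.card ≤ 2} \ {s : Finset ℕ | ∃ n : ℕ, s = {n, n + 1}}) := by
  set F : Set (Finset ℕ) :=
    {s : Finset ℕ | s.card ≤ 2} \ {s : Finset ℕ | ∃ n : ℕ, s = {n, n + 1}} with hFdef
  have hmemF : ∀ s : Finset ℕ, s ∈ F ↔ s.card ≤ 2 ∧ ¬ ∃ n : ℕ, s = {n, n + 1} := by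
    intro s; rfl
  refine ⟨?_, ?_, ?_⟩
  · -- compactness
    rw [IsCompactFam, ← isOpen_compl_iff, isOpen_iff_mem_nhds]
    intro x hx
    by_cases hA : ∃ n, x n = true ∧ x (n + 1) = true
    · obtain ⟨n, h1, h2⟩ := hA
      have hopen : ∀ m : ℕ, IsOpen {y : ℕ → Bool | y m = true} := fun m => by
        have h : {y : ℕ → Bool | y m = true} = (fun y : ℕ → Bool => y m) ⁻¹' {true} := rfl
        rw [h]; exact (isOpen_discrete _).preimage (continuous_apply m)
      have hU : {y : ℕ → Bool | y n = true ∧ y (n + 1) = true} ∈ nhds x := by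
        refine IsOpen.mem_nhds ?_ ⟨h1, h2⟩
        exact IsOpen.inter (hopen n) (hopen (n + 1))
      refine Filter.mem_of_superset hU ?_
      rintro y ⟨hy1, hy2⟩ ⟨s, hsF, rfl⟩
      have hn : n ∈ s := by simpa [chi] using hy1
      have hn1 : n + 1 ∈ s := by simpa [chi] using hy2
      have hsub : ({n, n + 1} : Finset ℕ) ⊆ s := by
        intro a ha; simp only [Finset.mem_insert, Finset.mem_singleton] at ha
        rcases ha with rfl | rfl <;> assumption
      have hcard2 : ({n, n + 1} : Finset ℕ).card = 2 := by
        rw [Finset.card_insert_of_notMem (by simp), Finset.card_singleton]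
      have heq : ({n, n + 1} : Finset ℕ) = s :=
        Finset.eq_of_subset_of_card_le hsub (by rw [hcard2]; exact (hmemF s).mp hsF |>.1)
      exact ((hmemF s).mp hsF).2 ⟨n, heq.symm⟩
    · by_cases hB : ∃ i j k : ℕ, x i = true ∧ x j = true ∧ x k = true ∧
          i ≠ j ∧ i ≠ k ∧ j ≠ k
      · obtain ⟨i, j, k, hi, hj, hk, hij, hik, hjk⟩ := hB
        have hopen : ∀ m : ℕ, IsOpen {y : ℕ → Bool | y m = true} := fun m => by
          have h : {y : ℕ → Bool | y m = true} = (fun y : ℕ → Bool => y m) ⁻¹' {true} := rfl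
          rw [h]; exact (isOpen_discrete _).preimage (continuous_apply m)
        have hU : {y : ℕ → Bool | y i = true ∧ y j = true ∧ y k = true} ∈ nhds x := by
          refine IsOpen.mem_nhds ?_ ⟨hi, hj, hk⟩
          exact IsOpen.inter (hopen i) (IsOpen.inter (hopen j) (hopen k))
        refine Filter.mem_of_superset hU ?_
        rintro y ⟨hy1, hy2, hy3⟩ ⟨s, hsF, rfl⟩
        have h3 : 2 < s.card := by
          refine Finset.two_lt_card_iff.mpr ⟨i, j, k, ?_, ?_, ?_, hij, hik, hjk⟩ <;>
            simpa [chi] using (by assumption : chi s _ = true)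
        exact absurd ((hmemF s).mp hsF).1 (by omega)
      ·
        exfalso
        apply hx
        set T : Set ℕ := {i | x i = true} with hT
        have hTfin : T.Finite := by
          by_contra hinf
          have hinf' : T.Infinite := hinf
          obtain ⟨i, hiT⟩ := hinf'.nonempty
          obtain ⟨j, hjT, hij⟩ := hinf'.exists_gt i
          obtain ⟨k, hkT, hjk⟩ := hinf'.exists_gt j
          exact hB ⟨i, j, k, hiT, hjT, hkT, hij.ne, (hij.trans hjk).ne, hjk.ne⟩
        refine ⟨hTfin.toFinset, ?_, ?_⟩
        · rw [hmemF]
          constructor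
          · by_contra h
            obtain ⟨a, b, c, ha, hb, hc, hab, hac, hbc⟩ :=
              Finset.two_lt_card_iff.mp (show 2 < hTfin.toFinset.card by omega)
            rw [Set.Finite.mem_toFinset] at ha hb hc
            exact hB ⟨a, b, c, ha, hb, hc, hab, hac, hbc⟩
          · rintro ⟨n, hn⟩
            have h1 : n ∈ hTfin.toFinset := by rw [hn]; simp
            have h2 : n + 1 ∈ hTfin.toFinset := by rw [hn]; simp
            rw [Set.Finite.mem_toFinset] at h1 h2
            exact hA ⟨n, h1, h2⟩
        · funext a
          simp only [chi, Set.Finite.mem_toFinset]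
          show decide (a ∈ T) = x a
          simp only [hT, Set.mem_setOf_eq]
          cases x a <;> simp
  · -- hereditary
    intro s t hst ht
    rw [hmemF] at ht ⊢
    obtain ⟨htc, htn⟩ := ht
    refine ⟨le_trans (Finset.card_le_card hst) htc, ?_⟩
    rintro ⟨n, rfl⟩
    have hcard2 : ({n, n + 1} : Finset ℕ).card = 2 := by
      rw [Finset.card_insert_of_notMem (by simp), Finset.card_singleton]
    have : ({n, n + 1} : Finset ℕ) = t :=
      Finset.eq_of_subset_of_card_le hst (by omega)
    exact htn ⟨n, this.symm⟩
  · -- not π-homeomorphic to a regular family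
    intro G _hFam _hComp _hHer hSpread π hGeq
    -- {π 0, π 2} ∈ G
    have h02 : ({0, 2} : Finset ℕ) ∈ F := by
      rw [hmemF]
      refine ⟨by decide, ?_⟩
      rintro ⟨n, hn⟩
      exact pair_ne_consec n hn
    have hpair : Finset.image π {0, 2} ∈ G := by
      rw [hGeq]
      refine ⟨{0, 2}, h02, ?_⟩
      ext a; simp [Finset.mem_image]
    set a := π 0 with ha
    set b := π 2 with hb
    have hab : a ≠ b := fun h => by simpa using π.injective h
    have himg : Finset.image π ({0, 2} : Finset ℕ) = {a, b} := by
      simp [Finset.image_insert, Finset.image_singleton, ha, hb]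
    set c := min a b with hc
    set d := max a b with hd
    have hcd : c < d := by
      rcases hab.lt_or_gt with h | h
      · simp [hc, hd, h.le, h]
      · simp [hc, hd, h.le, h]
    have hpaircd : ({c, d} : Finset ℕ) ∈ G := by
      have : ({a, b} : Finset ℕ) = {c, d} := by
        rcases le_total a b with h | h
        · simp [hc, hd, min_eq_left h, max_eq_right h]
        · rw [Finset.pair_comm]
          simp [hc, hd, min_eq_right h, max_eq_left h]
      rw [← this, ← himg]; exact hpair
    -- find N with π N ≥ d and π (N+1) ≥ d
    have htend : Filter.Tendsto π Filter.atTop Filter.atTop := by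
      rw [← Nat.cofinite_eq_atTop]
      exact π.injective.tendsto_cofinite
    obtain ⟨N, hN⟩ := Filter.eventually_atTop.mp (htend.eventually_ge_atTop d)
    have hu : d ≤ π N := hN N le_rfl
    have hv : d ≤ π (N + 1) := hN (N + 1) (by omega)
    have huv : π N ≠ π (N + 1) := fun h => by
      have := π.injective h; omega
    -- {π N, π (N+1)} is a spread of {c, d}
    have hspread : IsSpread ({c, d} : Finset ℕ) {π N, π (N + 1)} := by
      refine ⟨fun i => if i = c then π N else if i = d then π (N + 1) else i, ?_, ?_, ?_⟩
      · intro i hi j hj hij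
        simp only [Finset.coe_insert, Finset.coe_singleton, Set.mem_insert_iff,
          Set.mem_singleton_iff] at hi hj
        rcases hi with rfl | rfl <;> rcases hj with rfl | rfl <;>
          simp [hcd.ne, hcd.ne'] at hij ⊢
      · intro i hi
        simp only [Finset.mem_insert, Finset.mem_singleton] at hi
        rcases hi with rfl | rfl
        · simpa using le_trans hcd.le hu
        · simpa [hcd.ne'] using hv
      · simp [Finset.image_insert, Finset.image_singleton, hcd.ne']
    have hmem : ({π N, π (N + 1)} : Finset ℕ) ∈ G := hSpread _ hpaircd _ hspread
    rw [hGeq] at hmem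
    obtain ⟨s, hsF, hs⟩ := hmem
    have hseq : s = ({N, N + 1} : Finset ℕ) := by
      ext a
      have h1 := Iff.of_eq (congrArg (fun t => π a ∈ t) hs)
      simp only [Finset.mem_image, Finset.mem_insert, Finset.mem_singleton,
        π.injective.eq_iff, exists_eq_right] at h1 ⊢
      exact h1
    exact ((hmemF s).mp hsF).2 ⟨N, hseq⟩
end
end

section
/- There exists a compact hereditary family F on the first uncountable cardinal ω₁ (containing the empty set and all singletons) such that rk_F({α}) = α for every α < ω₁. -/
open scoped Classical

noncomputable section

/-!
Code the countable ordinals so that every pair `(v, δ)` of a finite set and an ordinal below `ω₁`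
is the code of cofinally many `γ < ω₁`; call `v` the set of predecessors *allowed* for `γ` and `δ`
its *level*. A finite set `s` is in the family when, for all `x < y` in `s`, `x` is allowed for `y`,
`level y < x`, and `level y < level x` unless `x = min s`. Its rank is `ω₁` for `s = ∅`, `a` for
`s = {a}` and `level (max s)` otherwise. Putting on top of `s` a fresh `γ` coding `(s, δ)` gives
proper extensions of rank `δ`, arbitrarily close to `s`, for every `δ` below the rank of `s`;
conversely no extension of `s` agreeing with it on `s ∪ allowed (max s)` other than `s` itself
has rank at least that of `s`. So this rank is the Cantor–Bendixson rank. The family is compact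
because along an infinite increasing set all of whose finite subsets are in the family the levels
would strictly decrease.
-/

open Cardinal Set Filter Topology
open scoped Ordinal

section CantorBendixson

variable {α X : Type*} [TopologicalSpace X]

theorem mem_cbDeriv_iff {A : Set X} {o : Ordinal} {x : X} :
    x ∈ cbDeriv A o ↔ x ∈ A ∧ ∀ b < o, x ∈ derivedSet (cbDeriv A b) := by
  rw [cbDeriv]
  simp

theorem cbDeriv_image_eq {S : Set α} {f : α → X} (hf : Function.Injective f) {ρ : α → Ordinal}
    (hacc : ∀ s ∈ S, ∀ δ < ρ s, ∀ U ∈ 𝓝 (f s), ∃ t ∈ S, f t ∈ U ∧ t ≠ s ∧ δ ≤ ρ t)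
    (hisol : ∀ s ∈ S, ∃ U ∈ 𝓝 (f s), ∀ t ∈ S, f t ∈ U → ρ s ≤ ρ t → t = s) (ξ : Ordinal) :
    cbDeriv (f '' S) ξ = f '' {s ∈ S | ξ ≤ ρ s} := by
  induction ξ using WellFoundedLT.induction with
  | _ ξ ih =>
  ext x
  rw [mem_cbDeriv_iff]
  constructor
  · rintro ⟨⟨s, hs, rfl⟩, hder⟩
    refine ⟨s, ⟨hs, not_lt.1 fun hlt => ?_⟩, rfl⟩
    obtain ⟨U, hU, hUs⟩ := hisol s hs
    have hx := hder _ hlt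
    rw [ih _ hlt, mem_derivedSet, accPt_iff_nhds] at hx
    obtain ⟨_, ⟨hyU, t, ⟨ht, hst⟩, rfl⟩, hne⟩ := hx U hU
    exact hne (congrArg f (hUs t ht hyU hst))
  · rintro ⟨s, ⟨hs, hξ⟩, rfl⟩
    refine ⟨⟨s, hs, rfl⟩, fun b hb => ?_⟩
    rw [ih _ hb, mem_derivedSet, accPt_iff_nhds]
    intro U hU
    obtain ⟨t, ht, htU, hts, hbt⟩ := hacc s hs b (hb.trans_le hξ) U hU
    exact ⟨f t, ⟨htU, t, ⟨ht, hbt⟩, rfl⟩, hf.ne hts⟩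

theorem cbRank_image_eq {S : Set α} {f : α → X} (hf : Function.Injective f) {ρ : α → Ordinal}
    (hacc : ∀ s ∈ S, ∀ δ < ρ s, ∀ U ∈ 𝓝 (f s), ∃ t ∈ S, f t ∈ U ∧ t ≠ s ∧ δ ≤ ρ t)
    (hisol : ∀ s ∈ S, ∃ U ∈ 𝓝 (f s), ∀ t ∈ S, f t ∈ U → ρ s ≤ ρ t → t = s) {s : α} (hs : s ∈ S) :
    cbRank (f '' S) (f s) = ρ s := by
  have : {o | f s ∈ cbDeriv (f '' S) o} = Iic (ρ s) := by
    ext o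
    simp [cbDeriv_image_eq hf hacc hisol, hf.eq_iff, hs]
  rw [cbRank, this, csSup_Iic]

end CantorBendixson

section CantorCube

variable {ι : Type*}

theorem nhds_basis_eqOn_finset (x : ι → Bool) :
    (𝓝 x).HasBasis (fun _ : Finset ι => True) (fun W => {y | ∀ i ∈ W, y i = x i}) := by
  refine ⟨fun U => ⟨fun hU => ?_, fun ⟨W, _, hW⟩ => mem_of_superset ?_ hW⟩⟩
  · obtain ⟨V, hVU, hV, hxV⟩ := mem_nhds_iff.1 hU
    obtain ⟨W, u, hu, hWV⟩ := isOpen_pi_iff.1 hV x hxV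
    exact ⟨W, trivial, fun y hy => hVU (hWV fun i hi => (hy i hi).symm ▸ (hu i hi).2)⟩
  · simp only [← Filter.eventually_iff, Filter.eventually_all_finset]
    exact fun i _ => (continuous_apply i).continuousAt.eventually_mem
      ((isOpen_discrete {x i}).mem_nhds rfl)

theorem chi_injective : Function.Injective (chi : Finset ι → ι → Bool) := fun s t hst => by
  ext i
  simpa [chi] using congrFun hst i

theorem forall_chi_eq_iff {s t : Finset ι} {W : Finset ι} :
    (∀ i ∈ W, chi t i = chi s i) ↔ ∀ i ∈ W, i ∈ t ↔ i ∈ s := by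
  simp [chi]

theorem cbRank_chiImg_eq {F : Set (Finset ι)} {ρ : Finset ι → Ordinal}
    (hacc : ∀ s ∈ F, ∀ δ < ρ s, ∀ W : Finset ι,
      ∃ t ∈ F, (∀ i ∈ W, i ∈ t ↔ i ∈ s) ∧ t ≠ s ∧ δ ≤ ρ t)
    (hisol : ∀ s ∈ F, ∃ W : Finset ι, ∀ t ∈ F, (∀ i ∈ W, i ∈ t ↔ i ∈ s) → ρ s ≤ ρ t → t = s)
    {s : Finset ι} (hs : s ∈ F) :
    cbRank (chiImg F) (chi s) = ρ s := by
  refine cbRank_image_eq chi_injective (fun s hs δ hδ U hU => ?_) (fun s hs => ?_) hs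
  · obtain ⟨W, -, hWU⟩ := (nhds_basis_eqOn_finset (chi s)).mem_iff.1 hU
    obtain ⟨t, ht, hts, hne, hδt⟩ := hacc s hs δ hδ W
    exact ⟨t, ht, hWU (forall_chi_eq_iff.2 hts), hne, hδt⟩
  · obtain ⟨W, hW⟩ := hisol s hs
    exact ⟨_, (nhds_basis_eqOn_finset (chi s)).mem_of_mem (i := W) trivial,
      fun t ht htW => hW t ht (forall_chi_eq_iff.1 htW)⟩

theorem isClosed_chiImg {F : Set (Finset ι)} (hF : IsHereditary F)
    (hfin : ∀ S : Set ι, (∀ v : Finset ι, ↑v ⊆ S → v ∈ F) → S.Finite) :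
    IsClosed (chiImg F) := by
  refine isClosed_of_closure_subset fun x hx => ?_
  have hsupp : ∀ v : Finset ι, ↑v ⊆ {i | x i = true} → v ∈ F := by
    intro v hv
    obtain ⟨_, hy, t, ht, rfl⟩ := mem_closure_iff_nhds.1 hx _
      ((nhds_basis_eqOn_finset x).mem_of_mem (i := v) trivial)
    exact hF (fun i hi => by simpa [chi, show x i = true from hv hi] using hy i hi) ht
  have hfinite := hfin _ hsupp
  refine ⟨hfinite.toFinset, hsupp _ (by simp), funext fun i => ?_⟩
  simp [chi]

end CantorCube

theorem exists_gt_mem_of_mk_eq {β : Type*} [LinearOrder β] [WellFoundedLT β] [NoMaxOrder β]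
    (hβ : (#β).ord = typeLT β) {S : Set β} (hS : #S = #β) (a : β) : ∃ b ∈ S, a < b := by
  by_contra! h
  obtain ⟨a', ha'⟩ := exists_gt a
  have hle : #S ≤ #(Iio a') := mk_le_mk_of_subset fun b hb => (h b hb).trans_lt ha'
  exact (hle.trans_lt (mk_Iio_lt a' hβ)).ne hS

universe u

abbrev Omega1 : Type (u + 1) := Iio (aleph.{u} 1).ord

namespace Omega1

theorem mk_eq : #Omega1.{u} = lift.{u + 1} (aleph.{u} 1) := by
  simp

theorem ord_mk : (#Omega1.{u}).ord = typeLT Omega1.{u} := by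
  rw [mk_eq, ← lift_ord, Ordinal.type_lt_Iio]

instance : NoMaxOrder Omega1.{u} :=
  ⟨fun a => ⟨⟨Order.succ a.1, (isSuccLimit_ord (aleph0_le_aleph 1)).succ_lt a.2⟩,
    Order.lt_succ a.1⟩⟩

instance : Infinite Omega1.{u} := by
  rw [infinite_iff, mk_eq]
  simp

theorem mk_prod_finset_prod : #(Omega1.{u} × Finset Omega1.{u} × Omega1.{u}) = #Omega1.{u} := by
  simp [mk_finset_of_infinite]

def code : Omega1.{u} ≃ Omega1.{u} × Finset Omega1.{u} × Omega1.{u} :=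
  (Cardinal.eq.1 mk_prod_finset_prod.symm).some

def allowed (γ : Omega1.{u}) : Finset Omega1.{u} := (code γ).2.1

def level (γ : Omega1.{u}) : Omega1.{u} := (code γ).2.2

theorem exists_gt_allowed_level (v : Finset Omega1.{u}) (δ a : Omega1.{u}) :
    ∃ γ, a < γ ∧ allowed γ = v ∧ level γ = δ := by
  have hS : #(range fun b => code.symm (b, v, δ)) = #Omega1 :=
    mk_range_eq _ (code.symm.injective.comp fun b b' h => (Prod.mk.inj h).1)
  obtain ⟨_, ⟨b, rfl⟩, hab⟩ := exists_gt_mem_of_mk_eq ord_mk hS a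
  exact ⟨_, hab, by simp [allowed], by simp [level]⟩

def fam : Set (Finset Omega1.{u}) :=
  {s | ∀ x ∈ s, ∀ y ∈ s, x < y →
    x ∈ allowed y ∧ level y < x ∧ ((∃ z ∈ s, z < x) → level y < level x)}

theorem empty_mem_fam : (∅ : Finset Omega1.{u}) ∈ fam := by
  simp [fam]

theorem singleton_mem_fam (a : Omega1.{u}) : {a} ∈ fam := by
  rintro x hx y hy hxy
  rw [Finset.mem_singleton] at hx hy
  subst hx hy
  exact absurd hxy (lt_irrefl _)

theorem isHereditary_fam : IsHereditary fam.{u} := by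
  intro s t hst ht x hx y hy hxy
  obtain ⟨hallowed, hlevel, hlevel'⟩ := ht x (hst hx) y (hst hy) hxy
  exact ⟨hallowed, hlevel, fun ⟨z, hz, hzx⟩ => hlevel' ⟨z, hst hz, hzx⟩⟩

def rank (s : Finset Omega1.{u}) : Ordinal.{u} :=
  if h : s.Nonempty then if s.card = 1 then (s.max' h).1 else (level (s.max' h)).1
  else (aleph 1).ord

theorem rank_empty : rank (∅ : Finset Omega1.{u}) = (aleph 1).ord := by
  simp [rank]

theorem rank_singleton (a : Omega1.{u}) : rank {a} = a.1 := by
  simp [rank]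

theorem rank_lt {s : Finset Omega1.{u}} (hs : s.Nonempty) : rank s < (aleph 1).ord := by
  rw [rank, dif_pos hs]
  split_ifs
  exacts [(s.max' hs).2, (level _).2]

theorem rank_le (s : Finset Omega1.{u}) : rank s ≤ (aleph 1).ord := by
  rcases s.eq_empty_or_nonempty with rfl | hs
  exacts [rank_empty.le, (rank_lt hs).le]

theorem rank_eq_level {s : Finset Omega1.{u}} (hs : 1 < s.card) {m : Omega1.{u}}
    (hm : IsGreatest ↑s m) : rank s = level m := by
  have hne : s.Nonempty := Finset.card_pos.1 (by omega)
  rw [rank, dif_pos hne, if_neg hs.ne', (s.isGreatest_max' hne).unique hm]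

theorem lt_of_lt_rank {s : Finset Omega1.{u}} (hs : s ∈ fam) {δ : Omega1.{u}} (hδ : δ.1 < rank s)
    {x : Omega1.{u}} (hx : x ∈ s) : δ < x ∧ ((∃ z ∈ s, z < x) → δ < level x) := by
  obtain hcard | hcard : s.card = 1 ∨ 1 < s.card := by
    have := Finset.card_pos.2 ⟨x, hx⟩
    omega
  · obtain ⟨a, rfl⟩ := Finset.card_eq_one.1 hcard
    rw [Finset.mem_singleton] at hx
    subst hx
    rw [rank_singleton] at hδ
    refine ⟨hδ, fun ⟨z, hz, hzx⟩ => ?_⟩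
    rw [Finset.mem_singleton] at hz
    exact absurd (hz ▸ hzx) (lt_irrefl _)
  · have hne : s.Nonempty := ⟨x, hx⟩
    set m := s.max' hne
    have hm : m ∈ s := s.max'_mem hne
    rw [rank_eq_level hcard (s.isGreatest_max' hne)] at hδ
    have hδm : δ < level m := hδ
    have hmin := (hs _ (s.min'_mem hne) m hm (s.min'_lt_max'_of_card hcard)).2.1
    refine ⟨hδm.trans (hmin.trans_le (s.min'_le x hx)), fun hz => ?_⟩
    rcases (s.le_max' x hx).lt_or_eq with hxm | hxm
    · exact hδm.trans ((hs x hx m hm hxm).2.2 hz)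
    · exact hxm ▸ hδm

theorem insert_mem_fam {s : Finset Omega1.{u}} (hs : s ∈ fam) {γ : Omega1.{u}}
    (hγ : ∀ x ∈ s, x < γ) (hallowed : s ⊆ allowed γ)
    (hlevel : ∀ x ∈ s, level γ < x ∧ ((∃ z ∈ s, z < x) → level γ < level x)) :
    insert γ s ∈ fam := by
  have below : ∀ x ∈ insert γ s, ∀ y ∈ insert γ s, x < y → x ∈ s := by
    intro x hx y hy hxy
    have hyγ : y ≤ γ := by
      rcases Finset.mem_insert.1 hy with rfl | hy
      exacts [le_rfl, (hγ y hy).le]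
    exact Finset.mem_of_mem_insert_of_ne hx (hxy.trans_le hyγ).ne
  intro x hx y hy hxy
  have hxs := below x hx y hy hxy
  have hlower : (∃ z ∈ insert γ s, z < x) → ∃ z ∈ s, z < x :=
    fun ⟨z, hz, hzx⟩ => ⟨z, below z hz x hx hzx, hzx⟩
  rcases Finset.mem_insert.1 hy with rfl | hys
  · exact ⟨hallowed hxs, (hlevel x hxs).1, (hlevel x hxs).2 ∘ hlower⟩
  · obtain ⟨hallowed, hlevel, hlevel'⟩ := hs x hxs y hys hxy
    exact ⟨hallowed, hlevel, hlevel' ∘ hlower⟩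

theorem rank_insert {s : Finset Omega1.{u}} (hs : s.Nonempty) {γ : Omega1.{u}}
    (hγ : ∀ x ∈ s, x < γ) : rank (insert γ s) = level γ := by
  have hγs : γ ∉ s := fun h => lt_irrefl γ (hγ γ h)
  refine rank_eq_level ?_ ⟨by simp, fun x hx => ?_⟩
  · rw [Finset.card_insert_of_notMem hγs]
    have := hs.card_pos
    omega
  · rcases Finset.mem_insert.1 hx with rfl | hx
    exacts [le_rfl, (hγ x hx).le]

theorem exists_extension_of_lt_rank {s : Finset Omega1.{u}} (hs : s ∈ fam) {δ : Ordinal.{u}}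
    (hδ : δ < rank s) (W : Finset Omega1.{u}) :
    ∃ t ∈ fam, (∀ i ∈ W, i ∈ t ↔ i ∈ s) ∧ t ≠ s ∧ δ ≤ rank t := by
  lift δ to Omega1.{u} using hδ.trans_le (rank_le s)
  obtain ⟨b, hb⟩ := (insert δ (W ∪ s)).exists_le
  obtain ⟨γ, hbγ, hallowed, hlevel⟩ := exists_gt_allowed_level s δ b
  have hγ : ∀ x ∈ insert δ (W ∪ s), x < γ := fun x hx => (hb x hx).trans_lt hbγ
  have hγs : ∀ x ∈ s, x < γ := fun x hx => hγ x (by simp [hx])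
  refine ⟨insert γ s, insert_mem_fam hs hγs hallowed.ge
    (fun x hx => hlevel ▸ lt_of_lt_rank hs hδ hx), fun i hi => ?_,
    Finset.insert_ne_self.2 fun h => lt_irrefl γ (hγs γ h), ?_⟩
  · simp [(hγ i (by simp [hi])).ne]
  · rcases s.eq_empty_or_nonempty with rfl | hne
    · simpa [rank_singleton] using (hγ δ (by simp)).le
    · rw [rank_insert hne hγs, hlevel]

theorem rank_lt_of_subset {s t : Finset Omega1.{u}} (ht : t ∈ fam) (hst : s ⊆ t)
    (hs : s.Nonempty) {M : Omega1.{u}} (hM : M ∈ t) (hsM : ∀ x ∈ s, x < M) :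
    rank t < rank s := by
  have htne : t.Nonempty := ⟨M, hM⟩
  have hm := s.max'_mem hs
  have hmM : s.max' hs < t.max' htne := (hsM _ hm).trans_le (t.le_max' M hM)
  have hcard : 1 < t.card :=
    Finset.one_lt_card.2 ⟨_, hst hm, _, t.max'_mem htne, hmM.ne⟩
  obtain ⟨-, hlevel, hlevel'⟩ := ht _ (hst hm) _ (t.max'_mem htne) hmM
  rw [rank_eq_level hcard (t.isGreatest_max' htne)]
  obtain hscard | hscard : s.card = 1 ∨ 1 < s.card := by
    have := hs.card_pos
    omega
  · obtain ⟨a, rfl⟩ := Finset.card_eq_one.1 hscard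
    rw [Finset.max'_singleton] at hlevel
    rw [rank_singleton]
    exact hlevel
  · rw [rank_eq_level hscard (s.isGreatest_max' hs)]
    exact hlevel' ⟨s.min' hs, hst (s.min'_mem hs), s.min'_lt_max'_of_card hscard⟩

theorem exists_isolating {s : Finset Omega1.{u}} (hs : s ∈ fam) :
    ∃ W : Finset Omega1.{u}, ∀ t ∈ fam, (∀ i ∈ W, i ∈ t ↔ i ∈ s) → rank s ≤ rank t → t = s := by
  rcases s.eq_empty_or_nonempty with rfl | hne
  · refine ⟨∅, fun t _ _ hrank => Finset.not_nonempty_iff_eq_empty.1 fun htne => ?_⟩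
    exact (rank_lt htne).not_ge (rank_empty ▸ hrank)
  have hm := s.max'_mem hne
  refine ⟨s ∪ allowed (s.max' hne), fun t ht hagree hrank => ?_⟩
  have hst : s ⊆ t := fun i hi => (hagree i (by simp [hi])).2 hi
  refine Finset.Subset.antisymm (fun x hxt => ?_) hst
  by_contra hxs
  rcases lt_trichotomy x (s.max' hne) with hxm | hxm | hmx
  · exact hxs ((hagree x (by simp [(ht x hxt _ (hst hm) hxm).1])).1 hxt)
  · exact hxs (hxm ▸ hm)
  · exact (rank_lt_of_subset ht hst hne hxt
      fun y hy => (s.le_max' y hy).trans_lt hmx).not_ge hrank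

theorem finite_of_forall_finset_subset_mem {S : Set Omega1.{u}}
    (hS : ∀ v : Finset Omega1.{u}, ↑v ⊆ S → v ∈ fam) : S.Finite := by
  by_contra hinf
  obtain ⟨x₀, hx₀, hmin⟩ := wellFounded_lt.has_min S (Set.Infinite.nonempty hinf)
  have hanti : StrictAnti fun x : ↥(S \ {x₀}) => level x.1 := by
    rintro ⟨x, hxS, hx⟩ ⟨y, hyS, -⟩ (hxy : x < y)
    have hx₀x : x₀ < x := (not_lt.1 (hmin x hxS)).lt_of_ne (Ne.symm hx)
    have hmem := hS {x₀, x, y} (by simp [Set.insert_subset_iff, hx₀, hxS, hyS])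
    exact (hmem x (by simp) y (by simp) hxy).2.2 ⟨x₀, by simp, hx₀x⟩
  have : WellFoundedGT ↥(S \ {x₀}) := hanti.wellFoundedGT
  have hfin : (S \ {x₀}).Finite := Set.finite_coe_iff.1 (Finite.of_wellFoundedLT_wellFoundedGT _)
  exact hinf (hfin.of_sdiff (Set.finite_singleton x₀))

end Omega1

/-- There is a compact hereditary family `F` on `ω₁` such that
`rk_F({α}) = α` for every `α < ω₁`. -/
theorem statement19 :
    ∃ F : Set (Finset ↥(Set.Iio (Cardinal.aleph 1).ord)),
      IsFam F ∧ IsCompactFam F ∧ IsHereditary F ∧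
        ∀ a : ↥(Set.Iio (Cardinal.aleph 1).ord),
          cbRank (chiImg F) (chi ({a} : Finset ↥(Set.Iio (Cardinal.aleph 1).ord))) = a.1 := by
  refine ⟨Omega1.fam, ⟨Omega1.empty_mem_fam, Omega1.singleton_mem_fam⟩,
    isClosed_chiImg Omega1.isHereditary_fam fun _ => Omega1.finite_of_forall_finset_subset_mem,
    Omega1.isHereditary_fam, fun a => ?_⟩
  rw [cbRank_chiImg_eq (fun _ hs _ hδ => Omega1.exists_extension_of_lt_rank hs hδ)
    (fun _ => Omega1.exists_isolating) (Omega1.singleton_mem_fam a), Omega1.rank_singleton]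
end
end
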